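/- Let a ∈ ℂ with 0 < |a| < 1, and let b, c be real with b > 0, c > 0, b ≠ c (so b > |a| − 1 and c > |a| − 1). If (bc/(c−b))·Γ(1−|a|)·[ (1−2b)·Γ(b)/Γ(1−|a|+b) − (1−2c)·Γ(c)/Γ(1−|a|+c) ] ≤ 2, then the function f(z) = z·₃F₂(a,b,c;b+1,c+1;z) belongs to the class S_p. -/

import Mathlib

noncomputable section

/-- Pochhammer symbol `(x)_n` for a complex number. -/
def poch (x : ℂ) (n : ℕ) : ℂ := ∏ k ∈ Finset.range n, (x + k)

/-- Pochhammer symbol `(x)_n` for a real number. -/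
def pochR (x : ℝ) (n : ℕ) : ℝ := ∏ k ∈ Finset.range n, (x + k)

/-- The open unit disc in `ℂ`. -/
def unitDisc : Set ℂ := {z : ℂ | ‖z‖ < 1}

/-- The class `A` of analytic functions on the unit disc normalized by
`f 0 = 0`, `f' 0 = 1` (i.e. `f z = z + ∑_{n≥2} a_n z^n`). -/
def memA (f : ℂ → ℂ) : Prop :=
  AnalyticOnNhd ℂ f unitDisc ∧ f 0 = 0 ∧ deriv f 0 = 1

/-- The class `S*_λ`. -/
def starlikeOrder (lam : ℝ) (f : ℂ → ℂ) : Prop :=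
  memA f ∧ (∀ z ∈ unitDisc, z ≠ 0 → f z ≠ 0) ∧
    ∀ z ∈ unitDisc, z ≠ 0 → ‖z * deriv f z / f z - 1‖ < lam

/-- The class `C_λ`: `f ∈ A` and `z ↦ z f'(z)` is in `S*_λ`. -/
def convexOrder (lam : ℝ) (f : ℂ → ℂ) : Prop :=
  memA f ∧ starlikeOrder lam (fun z => z * deriv f z)

/-- Uniformly convex functions. -/
def memUCV (f : ℂ → ℂ) : Prop :=
  memA f ∧ ∀ z ∈ unitDisc, deriv f z ≠ 0 ∧
    ‖z * deriv (deriv f) z / deriv f z‖ <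
      (1 + z * deriv (deriv f) z / deriv f z).re

/-- The class `S_p`. -/
def memSp (f : ℂ → ℂ) : Prop :=
  memA f ∧ (∀ z ∈ unitDisc, z ≠ 0 → f z ≠ 0) ∧
    ∀ z ∈ unitDisc, z ≠ 0 →
      ‖z * deriv f z / f z - 1‖ < (z * deriv f z / f z).re

/-- The class `R(β)`. -/
def memR (beta : ℝ) (f : ℂ → ℂ) : Prop :=
  memA f ∧ ∃ η ∈ Set.Ioo (-(Real.pi / 2)) (Real.pi / 2),
    ∀ z ∈ unitDisc, 0 < (Complex.exp (η * Complex.I) * (deriv f z - beta)).re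

/-- The class `S` of univalent functions in `A`. -/
def memS (f : ℂ → ℂ) : Prop :=
  memA f ∧ Set.InjOn f unitDisc

/-- Taylor coefficient of `f` at the origin. -/
def coeffAt (f : ℂ → ℂ) (n : ℕ) : ℂ := iteratedDeriv n f 0 / n.factorial

/-- Clausen's hypergeometric function `₃F₂(a,b,c;d,e;z)`. -/
def hyp32 (a b c d e z : ℂ) : ℂ :=
  ∑' n : ℕ, poch a n * poch b n * poch c n /
    (poch d n * poch e n * (n.factorial : ℂ)) * z ^ n

/-- The operator `I_{a,b,c}`: Hadamard product of `z ₃F₂(a,b,c;b+1,c+1;z)` with `f`. -/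
def opI (a : ℂ) (b c : ℝ) (f : ℂ → ℂ) (z : ℂ) : ℂ :=
  z + ∑' n : ℕ,
    (poch a (n + 1) * poch (b : ℂ) (n + 1) * poch (c : ℂ) (n + 1) /
      (poch ((b : ℂ) + 1) (n + 1) * poch ((c : ℂ) + 1) (n + 1) *
        ((n + 1).factorial : ℂ))) * coeffAt f (n + 2) * z ^ (n + 2)

/-!
Write `z ₃F₂(a,b,c;b+1,c+1;z) = z g(z)` with `g z = ∑ Aₙ zⁿ`, `A₀ = 1`. Then `z f'/f - 1 = z g'/g`,
and `|w| < Re (1 + w)` as soon as `|w| < 1/2`; the estimates `|g - 1| ≤ |z| ∑_{n ≥ 1} |Aₙ|` and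
`|z g'| ≤ |z| ∑_{n ≥ 1} n |Aₙ|` show that `2 |z g'| < |g|` whenever `∑ (2n+1) |Aₙ| ≤ 2`.

Here `Aₙ = (a)ₙ/n! · b/(b+n) · c/(c+n)`, so `|Aₙ|` is dominated by the same expression with `|a|`
for `a`. Partial fractions, `(2n+1) bc/((b+n)(c+n)) = bc/(c-b) ((1-2b)/(b+n) - (1-2c)/(c+n))`,
reduce the weighted sum of the majorant to the series `∑ (α)ₙ/(n! (γ+n)) = B(γ, 1-α)`, which is
the binomial series `(1-x)^(-α) = ∑ (α)ₙ/n! xⁿ` integrated against `x^(γ-1)` over `(0,1)`. The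
resulting value is the left-hand side of the hypothesis.
-/

open MeasureTheory Set ProbabilityTheory

lemma poch_add_one_mul (x : ℂ) (n : ℕ) : poch (x + 1) n * x = poch x n * (x + n) := by
  have h : poch x (n + 1) = poch (x + 1) n * x := by
    simp only [poch, Finset.prod_range_succ', Nat.cast_add, Nat.cast_one, Nat.cast_zero, add_zero]
    congr 1
    exact Finset.prod_congr rfl fun k _ => by ring
  rw [← h, poch, Finset.prod_range_succ]
  rfl

lemma poch_div_poch_add_one {x : ℂ} (hx : ∀ k : ℕ, x + k ≠ 0) (n : ℕ) :
    poch x n / poch (x + 1) n = x / (x + n) := by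
  have h : poch (x + 1) n ≠ 0 := Finset.prod_ne_zero_iff.2 fun k _ => by
    simpa [add_assoc, add_comm (1 : ℂ)] using hx (k + 1)
  rw [div_eq_div_iff h (hx n), mul_comm x, poch_add_one_mul]

lemma norm_poch_le (a : ℂ) (n : ℕ) : ‖poch a n‖ ≤ pochR ‖a‖ n :=
  (Finset.norm_prod_le _ _).trans <| Finset.prod_le_prod (fun _ _ => norm_nonneg _)
    fun k _ => by simpa using norm_add_le a k

lemma pochR_nonneg {x : ℝ} (hx : 0 ≤ x) (n : ℕ) : 0 ≤ pochR x n :=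
  Finset.prod_nonneg fun k _ => by positivity

lemma pochR_eq_ascPochhammer_eval (x : ℝ) (n : ℕ) : pochR x n = (ascPochhammer ℝ n).eval x := by
  induction n with
  | zero => simp [pochR]
  | succ n ih => rw [pochR, Finset.prod_range_succ, ascPochhammer_succ_eval, ← ih]; rfl

lemma ring_choose_add_sub_one (α : ℝ) (n : ℕ) :
    Ring.choose (α + n - 1) n = pochR α n / n.factorial := by
  rw [Ring.choose_eq_smul, Polynomial.descPochhammer_smeval_eq_ascPochhammer,
    Polynomial.ascPochhammer_smeval_eq_eval, pochR_eq_ascPochhammer_eval, smul_eq_mul,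
    inv_mul_eq_div]
  ring_nf

theorem hasSum_pochR_div_factorial_mul_pow (α : ℝ) {x : ℝ} (hx : |x| < 1) :
    HasSum (fun n => pochR α n / n.factorial * x ^ n) ((1 - x) ^ (-α)) := by
  have h := (Real.one_div_one_sub_rpow_hasFPowerSeriesOnBall_zero α).hasSum
    (y := x) (by simpa [enorm_eq_nnnorm, ← NNReal.coe_lt_coe] using hx)
  simp only [FormalMultilinearSeries.ofScalars_apply_eq, smul_eq_mul, zero_add,
    ring_choose_add_sub_one] at h
  rwa [Real.rpow_neg (by linarith [abs_lt.1 hx]), ← one_div]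

lemma beta_one_right {u : ℝ} (hu : 0 < u) : beta u 1 = 1 / u := by
  rw [beta, Real.Gamma_one, Real.Gamma_add_one hu.ne']
  field_simp [(Real.Gamma_pos_of_pos hu).ne']

lemma lintegral_Ioo_rpow_mul_one_sub_rpow {u v : ℝ} (hu : 0 < u) (hv : 0 < v) :
    ∫⁻ x in Ioo 0 1, ENNReal.ofReal (x ^ (u - 1) * (1 - x) ^ (v - 1)) =
      ENNReal.ofReal (beta u v) := by
  have hB := beta_pos hu hv
  have h := lintegral_betaPDF_eq_one hu hv
  rw [lintegral_betaPDF] at h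
  simp_rw [mul_assoc, ENNReal.ofReal_mul (one_div_pos.2 hB).le] at h
  rw [lintegral_const_mul' _ _ ENNReal.ofReal_ne_top] at h
  calc _ = ENNReal.ofReal (beta u v) * (ENNReal.ofReal (1 / beta u v) *
        ∫⁻ x in Ioo 0 1, ENNReal.ofReal (x ^ (u - 1) * (1 - x) ^ (v - 1))) := by
        rw [← mul_assoc, ← ENNReal.ofReal_mul hB.le, mul_one_div_cancel hB.ne',
          ENNReal.ofReal_one, one_mul]
    _ = ENNReal.ofReal (beta u v) := by rw [h, mul_one]

lemma hasSum_of_tsum_ofReal_eq {ι : Type*} {f : ι → ℝ} {s : ℝ} (hf : ∀ i, 0 ≤ f i) (hs : 0 ≤ s)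
    (h : ∑' i, ENNReal.ofReal (f i) = ENNReal.ofReal s) : HasSum f s := by
  have hsum : Summable f := (ENNReal.summable_toReal (h ▸ ENNReal.ofReal_ne_top)).congr
    fun i => ENNReal.toReal_ofReal (hf i)
  rw [← ENNReal.ofReal_tsum_of_nonneg hf hsum,
    ENNReal.ofReal_eq_ofReal_iff (tsum_nonneg hf) hs] at h
  exact h ▸ hsum.hasSum

theorem hasSum_pochR_div_factorial_mul_add {α γ : ℝ} (hα0 : 0 ≤ α) (hα1 : α < 1) (hγ : 0 < γ) :
    HasSum (fun n => pochR α n / (n.factorial * (γ + n))) (beta γ (1 - α)) := by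
  set f : ℕ → ℝ → ℝ := fun n x => pochR α n / n.factorial * x ^ (γ + n - 1)
  have hcoeff : ∀ n, 0 ≤ pochR α n / n.factorial := fun n =>
    div_nonneg (pochR_nonneg hα0 n) (Nat.cast_nonneg _)
  have hf : ∀ n, ∀ x ∈ Ioo (0 : ℝ) 1, 0 ≤ f n x := fun n x hx =>
    mul_nonneg (hcoeff n) (Real.rpow_nonneg hx.1.le _)
  have hterm : ∀ n, ∫⁻ x in Ioo 0 1, ENNReal.ofReal (f n x) =
      ENNReal.ofReal (pochR α n / (n.factorial * (γ + n))) := fun n => by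
    have hγn : 0 < γ + n := by positivity
    have h := lintegral_Ioo_rpow_mul_one_sub_rpow hγn one_pos
    simp only [sub_self, Real.rpow_zero, mul_one, beta_one_right hγn] at h
    simp only [f, ENNReal.ofReal_mul (hcoeff n)]
    rw [lintegral_const_mul' _ _ ENNReal.ofReal_ne_top, h, ← ENNReal.ofReal_mul (hcoeff n)]
    congr 1
    field_simp
  have hsum : ∀ x ∈ Ioo (0 : ℝ) 1, ∑' n, ENNReal.ofReal (f n x) =
      ENNReal.ofReal (x ^ (γ - 1) * (1 - x) ^ (-α)) := fun x hx => by
    have h : HasSum (fun n => f n x) (x ^ (γ - 1) * (1 - x) ^ (-α)) := by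
      refine ((hasSum_pochR_div_factorial_mul_pow α (by rw [abs_of_pos hx.1]; exact hx.2)).mul_left
        (x ^ (γ - 1))).congr_fun fun n => ?_
      simp only [f]
      rw [show γ + n - 1 = (γ - 1) + n by ring, Real.rpow_add hx.1, Real.rpow_natCast]
      ring
    rw [← h.tsum_eq, ENNReal.ofReal_tsum_of_nonneg (fun n => hf n x hx) h.summable]
  refine hasSum_of_tsum_ofReal_eq (fun n => ?_) (beta_pos hγ (by linarith)).le ?_
  · have := pochR_nonneg hα0 n
    positivity
  calc ∑' n, ENNReal.ofReal (pochR α n / (n.factorial * (γ + n)))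
      = ∫⁻ x in Ioo 0 1, ∑' n, ENNReal.ofReal (f n x) := by
        rw [lintegral_tsum fun n => by fun_prop]
        simp only [hterm]
    _ = ENNReal.ofReal (beta γ (1 - α)) := by
        rw [setLIntegral_congr_fun measurableSet_Ioo hsum, ← sub_sub_cancel_left 1 α,
          lintegral_Ioo_rpow_mul_one_sub_rpow hγ (by linarith)]

lemma unitDisc_eq_ball : unitDisc = Metric.ball 0 1 := by
  ext z
  simp [unitDisc]

lemma norm_lt_re_one_add_of_two_mul_norm_lt {w : ℂ} (hw : 2 * ‖w‖ < 1) : ‖w‖ < (1 + w).re := by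
  have := neg_abs_le w.re
  have := Complex.abs_re_le_norm w
  rw [Complex.add_re, Complex.one_re]
  linarith

section PowerSeries

variable {A : ℕ → ℂ} {z : ℂ}

lemma summable_mul_pow (hA : Summable fun n => ‖A n‖) (hz : ‖z‖ ≤ 1) :
    Summable fun n => A n * z ^ n :=
  .of_norm_bounded hA fun n => by
    rw [norm_mul, norm_pow]
    exact mul_le_of_le_one_right (norm_nonneg _) (pow_le_one₀ (norm_nonneg z) hz)

lemma norm_tsum_mul_pow_succ_le (hA : Summable fun n => ‖A n‖) (hz : ‖z‖ ≤ 1) :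
    ‖∑' n, A n * z ^ (n + 1)‖ ≤ ‖z‖ * ∑' n, ‖A n‖ := by
  rw [← tsum_mul_left]
  refine tsum_of_norm_bounded (hA.mul_left _).hasSum fun n => ?_
  rw [norm_mul, norm_pow, mul_comm]
  exact mul_le_mul_of_nonneg_right (pow_le_of_le_one (norm_nonneg z) hz n.succ_ne_zero)
    (norm_nonneg _)

lemma hasDerivAt_tsum_mul_pow (hA : Summable fun n => n * ‖A n‖) (hz : ‖z‖ < 1) :
    HasDerivAt (fun w => ∑' n, A n * w ^ n) (∑' n, A n * (n * z ^ (n - 1))) z := by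
  refine hasDerivAt_tsum_of_isPreconnected hA Metric.isOpen_ball
    (convex_ball (0 : ℂ) 1).isPreconnected (fun n y _ => (hasDerivAt_pow n y).const_mul (A n))
    (fun n y hy => ?_) (Metric.mem_ball_self (x := (0 : ℂ)) one_pos) ?_ (mem_ball_zero_iff.2 hz)
  · rw [norm_mul, norm_mul, norm_pow, Complex.norm_natCast, mul_comm]
    exact mul_le_mul_of_nonneg_right (mul_le_of_le_one_right (Nat.cast_nonneg n)
      (pow_le_one₀ (norm_nonneg y) (mem_ball_zero_iff.1 hy).le)) (norm_nonneg (A n))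
  · exact (hasSum_single 0 fun n hn => by simp [hn]).summable

lemma mul_deriv_tsum_mul_pow (hA : Summable fun n => n * ‖A n‖) (hz : ‖z‖ < 1) :
    z * deriv (fun w => ∑' n, A n * w ^ n) z = ∑' n, n * A n * z ^ n := by
  rw [(hasDerivAt_tsum_mul_pow hA hz).deriv, ← tsum_mul_left]
  congr 1
  ext n
  rcases n with _ | n
  · simp
  · rw [Nat.add_sub_cancel, pow_succ]
    ring

lemma norm_tsum_sub_add_two_mul_norm_le (hA : Summable fun n => (2 * n + 1) * ‖A n‖)
    (hz : ‖z‖ ≤ 1) :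
    ‖(∑' n, A n * z ^ n) - A 0‖ + 2 * ‖∑' n, n * A n * z ^ n‖ ≤
      ‖z‖ * (∑' n, (2 * n + 1) * ‖A n‖ - ‖A 0‖) := by
  have hA₁ : Summable fun n => ‖A n‖ := hA.of_nonneg_of_le (fun n => norm_nonneg _)
    fun n => le_mul_of_one_le_left (norm_nonneg _) (by linarith [n.cast_nonneg (α := ℝ)])
  have hA₂ : Summable fun n : ℕ => ‖(n : ℂ) * A n‖ := hA.of_nonneg_of_le (fun n => norm_nonneg _)
    fun n => by
      rw [norm_mul, Complex.norm_natCast]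
      exact mul_le_mul_of_nonneg_right (by linarith) (norm_nonneg _)
  have h₁ : ‖(∑' n, A n * z ^ n) - A 0‖ ≤ ‖z‖ * ∑' n, ‖A (n + 1)‖ := by
    rw [(summable_mul_pow hA₁ hz).tsum_eq_zero_add, pow_zero, mul_one, add_sub_cancel_left]
    exact norm_tsum_mul_pow_succ_le ((summable_nat_add_iff 1).2 hA₁) hz
  have h₂ : ‖∑' n : ℕ, n * A n * z ^ n‖ ≤ ‖z‖ * ∑' n, ‖((n + 1 : ℕ) : ℂ) * A (n + 1)‖ := by
    rw [(summable_mul_pow hA₂ hz).tsum_eq_zero_add, CharP.cast_eq_zero, zero_mul, zero_mul,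
      zero_add]
    exact norm_tsum_mul_pow_succ_le ((summable_nat_add_iff 1).2 hA₂) hz
  have htail := (((summable_nat_add_iff 1).2 hA₁).hasSum.add
    (((summable_nat_add_iff 1).2 hA₂).hasSum.mul_left 2)).unique
    ((hasSum_nat_add_iff' 1).2 hA.hasSum |>.congr_fun fun n => by
      rw [norm_mul, Complex.norm_natCast]
      push_cast
      ring)
  simp only [Finset.range_one, Finset.sum_singleton, CharP.cast_eq_zero, mul_zero, zero_add,
    one_mul] at htail
  rw [← htail]
  linarith

theorem memSp_mul_tsum_mul_pow_of_tsum_le (hA0 : A 0 = 1)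
    (hA : Summable fun n => (2 * n + 1) * ‖A n‖) (hle : ∑' n, (2 * n + 1) * ‖A n‖ ≤ 2) :
    memSp fun z => z * ∑' n, A n * z ^ n := by
  set g : ℂ → ℂ := fun w => ∑' n, A n * w ^ n
  have hA' : Summable fun n => n * ‖A n‖ := hA.of_nonneg_of_le (fun n => by positivity)
    fun n => mul_le_mul_of_nonneg_right (by linarith) (norm_nonneg _)
  have hg : ∀ z ∈ unitDisc, HasDerivAt g (deriv g z) z := fun z hz =>
    (hasDerivAt_tsum_mul_pow hA' hz).differentiableAt.hasDerivAt
  have hF : ∀ z ∈ unitDisc, deriv (fun w => w * g w) z = g z + z * deriv g z := fun z hz => by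
    simpa using ((hasDerivAt_id' z).fun_mul (hg z hz)).deriv
  have hg0 : g 0 = 1 := by
    simp only [g]
    rw [tsum_eq_single 0 fun n hn => by simp [hn]]
    simp [hA0]
  have hkey : ∀ z ∈ unitDisc, 2 * ‖z * deriv g z‖ < ‖g z‖ := fun z hz => by
    have hz1 : ‖z‖ < 1 := hz
    have h := norm_tsum_sub_add_two_mul_norm_le hA hz1.le
    rw [← mul_deriv_tsum_mul_pow hA' hz1, hA0, norm_one] at h
    have h₁ : ‖z‖ * (∑' n, (2 * n + 1) * ‖A n‖ - 1) ≤ ‖z‖ :=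
      mul_le_of_le_one_right (norm_nonneg z) (by linarith)
    have h₂ := norm_le_norm_add_norm_sub (g z) 1
    rw [norm_one] at h₂
    linarith
  have hgz : ∀ z ∈ unitDisc, g z ≠ 0 := fun z hz =>
    norm_pos_iff.1 ((norm_nonneg _).trans_lt ((le_mul_of_one_le_left (norm_nonneg _)
      one_le_two).trans_lt (hkey z hz)))
  refine ⟨⟨?_, by simp, by rw [hF 0 (by simp [unitDisc]), hg0]; simp⟩,
    fun z hz hz0 => mul_ne_zero hz0 (hgz z hz), fun z hz hz0 => ?_⟩
  · rw [unitDisc_eq_ball] at hg ⊢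
    exact analyticOnNhd_id.mul (DifferentiableOn.analyticOnNhd
      (fun z hz => (hg z hz).differentiableAt.differentiableWithinAt) Metric.isOpen_ball)
  · have hq : z * deriv (fun w => w * g w) z / (z * g z) = 1 + z * deriv g z / g z := by
      have := hgz z hz
      rw [hF z hz]
      field_simp
    rw [hq, add_sub_cancel_left]
    refine norm_lt_re_one_add_of_two_mul_norm_lt ?_
    rw [norm_div, mul_div_assoc', div_lt_one (norm_pos_iff.2 (hgz z hz))]
    exact hkey z hz

end PowerSeries

lemma hyp32_coeff_eq (a : ℂ) {b c : ℂ} (hb : ∀ k : ℕ, b + k ≠ 0) (hc : ∀ k : ℕ, c + k ≠ 0)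
    (n : ℕ) :
    poch a n * poch b n * poch c n / (poch (b + 1) n * poch (c + 1) n * n.factorial) =
      poch a n / n.factorial * (b / (b + n)) * (c / (c + n)) := by
  rw [← poch_div_poch_add_one hb, ← poch_div_poch_add_one hc]
  ring

lemma norm_hyp32_coeff_le (a : ℂ) {b c : ℝ} (hb : 0 < b) (hc : 0 < c) (n : ℕ) :
    ‖poch a n * poch b n * poch c n / (poch (b + 1) n * poch (c + 1) n * n.factorial)‖ ≤
      pochR ‖a‖ n / n.factorial * (b / (b + n)) * (c / (c + n)) := by
  have hne : ∀ x : ℝ, 0 < x → ∀ k : ℕ, (x : ℂ) + k ≠ 0 := fun x hx k => by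
    exact_mod_cast (by positivity : x + k ≠ 0)
  have hnorm : ∀ x : ℝ, 0 < x → ‖(x : ℂ) / (x + n)‖ = x / (x + n) := fun x hx => by
    rw [← Complex.ofReal_natCast, ← Complex.ofReal_add, ← Complex.ofReal_div,
      Complex.norm_of_nonneg (by positivity)]
  rw [hyp32_coeff_eq a (hne b hb) (hne c hc), norm_mul, norm_mul, norm_div,
    Complex.norm_natCast, hnorm b hb, hnorm c hc]
  gcongr
  exact norm_poch_le a n

theorem hasSum_two_mul_add_one_mul_majorant {α b c : ℝ} (hα0 : 0 ≤ α) (hα1 : α < 1)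
    (hb : 0 < b) (hc : 0 < c) (hbc : b ≠ c) :
    HasSum (fun n : ℕ => (2 * n + 1) * (pochR α n / n.factorial * (b / (b + n)) * (c / (c + n))))
      (b * c / (c - b) * ((1 - 2 * b) * beta b (1 - α) - (1 - 2 * c) * beta c (1 - α))) := by
  refine ((((hasSum_pochR_div_factorial_mul_add hα0 hα1 hb).mul_left (1 - 2 * b)).sub
    ((hasSum_pochR_div_factorial_mul_add hα0 hα1 hc).mul_left (1 - 2 * c))).mul_left
    (b * c / (c - b))).congr_fun fun n => ?_
  have : c - b ≠ 0 := sub_ne_zero.2 hbc.symm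
  field_simp
  ring

theorem thm_sp_hyp_general (a : ℂ) (b c : ℝ)
    (ha : ‖a‖ < 1)
    (hb : 0 < b) (hc : 0 < c) (hbc : b ≠ c)
    (h : b * c / (c - b) * Real.Gamma (1 - ‖a‖) *
        ((1 - 2 * b) * Real.Gamma b / Real.Gamma (1 - ‖a‖ + b) -
         (1 - 2 * c) * Real.Gamma c / Real.Gamma (1 - ‖a‖ + c)) ≤ 2) :
    memSp
      (fun z => z * hyp32 a (b : ℂ) (c : ℂ) ((b : ℂ) + 1) ((c : ℂ) + 1) z) := by
  have hT := hasSum_two_mul_add_one_mul_majorant (norm_nonneg a) ha hb hc hbc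
  have hle : ∀ n : ℕ, (2 * n + 1) * ‖poch a n * poch b n * poch c n /
      (poch (b + 1) n * poch (c + 1) n * n.factorial)‖ ≤
      (2 * n + 1) * (pochR ‖a‖ n / n.factorial * (b / (b + n)) * (c / (c + n))) := fun n =>
    mul_le_mul_of_nonneg_left (norm_hyp32_coeff_le a hb hc n) (by positivity)
  have hsum := hT.summable.of_nonneg_of_le (fun n => by positivity) hle
  refine memSp_mul_tsum_mul_pow_of_tsum_le (by simp [poch]) hsum
    ((hsum.tsum_le_tsum hle hT.summable).trans ?_)
  rw [hT.tsum_eq]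
  refine (le_of_eq ?_).trans h
  rw [beta, beta, add_comm b, add_comm c]
  ring

/-- Theorem 5.1: `z ₃F₂(a,b,c;b+1,c+1;z)` belongs to `S_p`. -/
theorem thm_sp_hyp (a : ℂ) (b c : ℝ)
    (ha0 : a ≠ 0) (ha : ‖a‖ < 1)
    (hb : 0 < b) (hc : 0 < c) (hbc : b ≠ c)
    (h : b * c / (c - b) * Real.Gamma (1 - ‖a‖) *
        ((1 - 2 * b) * Real.Gamma b / Real.Gamma (1 - ‖a‖ + b) -
         (1 - 2 * c) * Real.Gamma c / Real.Gamma (1 - ‖a‖ + c)) ≤ 2) :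
    memSp
      (fun z => z * hyp32 a (b : ℂ) (c : ℂ) ((b : ℂ) + 1) ((c : ℂ) + 1) z) :=
  thm_sp_hyp_general a b c ha hb hc hbc h
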